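/- arXiv:1001.1196 — 3 statements merged into one kernel-verified Lean document; each statement's English description precedes it below -/
import Mathlib

section
/- Let Ξ ⊂ F^2 be a finite set of points. For each distinct ordinate value y appearing in Ξ, let H_y(Ξ) be the set of abscissae of points of Ξ on the line with that ordinate, enumerated as H_0, ..., H_ν in order of nonincreasing cardinality. If H_0 ⊇ H_1 ⊇ ... ⊇ H_ν, then Ξ is a lower interpolation site, i.e., there exist distinct elements x_0,...,x_{m_0} ∈ F and distinct y_0,...,y_ν ∈ F and a lower set A ⊂ ℕ₀² with Ξ = {(x_i, y_j) : (i,j) ∈ A}. -/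
/-- if the abscissa sets `H_0 ⊇ H_1 ⊇ ⋯ ⊇ H_ν` of the horizontal lines
through `Ξ` form a decreasing chain, then `Ξ` is a lower interpolation site. -/
theorem chain_of_abscissae_implies_lower {F : Type*} [Field F] (ν : ℕ)
    (H : ℕ → Finset F) (y : ℕ → F)
    (hy : ∀ j k, j ≤ ν → k ≤ ν → y j = y k → j = k)
    (hne : ∀ j ≤ ν, (H j).Nonempty)
    (hchain : ∀ j k, j ≤ k → k ≤ ν → H k ⊆ H j) :
    ∃ (A : Finset (ℕ × ℕ)) (xx yy : ℕ → F),
      (∀ p ∈ A, ∀ i' j', i' ≤ p.1 → j' ≤ p.2 → (i', j') ∈ A) ∧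
      Set.InjOn xx {i | ∃ j, (i, j) ∈ A} ∧
      Set.InjOn yy {j | ∃ i, (i, j) ∈ A} ∧
      {p : F × F | ∃ j ≤ ν, ∃ a ∈ H j, p = (a, y j)} =
        {p : F × F | ∃ q ∈ A, p = (xx q.1, yy q.2)} := by
  classical
  -- the "rank" of an abscissa: how many of the lines contain it
  set r : F → ℕ := fun a => ((Finset.range (ν+1)).filter (fun j => a ∈ H j)).card with hrdef
  -- key fact: for j ≤ ν, a ∈ H j ↔ j < r a
  have key : ∀ a : F, ∀ j, j ≤ ν → (a ∈ H j ↔ j < r a) := by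
    intro a j hj
    have hS : ∀ k ∈ (Finset.range (ν+1)).filter (fun j => a ∈ H j), ∀ k', k' ≤ k →
        k' ∈ (Finset.range (ν+1)).filter (fun j => a ∈ H j) := by
      intro k hk k' hk'
      simp only [Finset.mem_filter, Finset.mem_range] at hk ⊢
      exact ⟨lt_of_le_of_lt hk' hk.1, hchain k' k hk' (Nat.lt_succ_iff.mp hk.1) hk.2⟩
    constructor
    · intro h
      have hsub : Finset.range (j+1) ⊆ (Finset.range (ν+1)).filter (fun j => a ∈ H j) := by
        intro k hk
        exact hS j (by simp [Nat.lt_succ_iff, hj, h]) k (Nat.lt_succ_iff.mp (Finset.mem_range.mp hk))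
      have := Finset.card_le_card hsub
      simpa [hrdef] using this
    · intro h
      by_contra hmem
      have hsub : (Finset.range (ν+1)).filter (fun j => a ∈ H j) ⊆ Finset.range j := by
        intro k hk
        rw [Finset.mem_range]
        by_contra hk'
        exact hmem ((Finset.mem_filter.mp (hS k hk j (le_of_not_gt hk'))).2)
      have := Finset.card_le_card hsub
      simp only [Finset.card_range] at this
      simp only [hrdef] at h
      omega
  -- sort the points of H 0 by decreasing rank
  set L := (H 0).toList.mergeSort (fun a b => decide (r b ≤ r a)) with hL
  have hperm : L.Perm (H 0).toList := List.mergeSort_perm _ _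
  have hnodup : L.Nodup := hperm.nodup_iff.mpr (H 0).nodup_toList
  have hmemL : ∀ a, a ∈ L ↔ a ∈ H 0 := fun a => by rw [hperm.mem_iff, Finset.mem_toList]
  have hsorted : List.Pairwise (fun a b => r b ≤ r a) L := by
    have := List.pairwise_mergeSort (le := fun a b : F => decide (r b ≤ r a))
      (fun a b c hab hbc => by simp only [decide_eq_true_eq] at *; omega)
      (fun a b => by simp only [Bool.or_eq_true, decide_eq_true_eq]; omega)
      (H 0).toList
    rw [← hL] at this
    simpa using this
  set xx : ℕ → F := fun i => L.getD i 0 with hxx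
  have hanti : ∀ i k, i ≤ k → k < L.length → r (xx k) ≤ r (xx i) := by
    intro i k hik hk
    rcases eq_or_lt_of_le hik with rfl | h
    · exact le_refl _
    · have hh := (List.pairwise_iff_getElem.mp hsorted) i k (lt_of_le_of_lt hik hk) hk h
      have e1 : xx i = L[i] := List.getD_eq_getElem L 0 (lt_of_le_of_lt hik hk)
      have e2 : xx k = L[k] := List.getD_eq_getElem L 0 hk
      rw [e1, e2]; exact hh
  refine ⟨(Finset.range L.length ×ˢ Finset.range (ν+1)).filter
      (fun p => p.2 < r (xx p.1)), xx, y, ?_, ?_, ?_, ?_⟩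
  · -- lower set
    rintro ⟨i, j⟩ hp i' j' hi' hj'
    simp only [Finset.mem_filter, Finset.mem_product, Finset.mem_range] at hp ⊢
    refine ⟨⟨lt_of_le_of_lt hi' hp.1.1, lt_of_le_of_lt hj' hp.1.2⟩, ?_⟩
    calc j' ≤ j := hj'
    _ < r (xx i) := hp.2
    _ ≤ r (xx i') := hanti i' i hi' hp.1.1
  · -- InjOn xx
    intro i hi i' hi' hxxe
    simp only [Set.mem_setOf_eq] at hi hi'
    obtain ⟨j, hj⟩ := hi
    obtain ⟨j', hj'⟩ := hi'
    simp only [Finset.mem_filter, Finset.mem_product, Finset.mem_range] at hj hj'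
    have h1 : i < L.length := hj.1.1
    have h2 : i' < L.length := hj'.1.1
    simp only [hxx] at hxxe
    rw [List.getD_eq_getElem _ _ h1, List.getD_eq_getElem _ _ h2] at hxxe
    exact (hnodup.getElem_inj_iff).mp hxxe
  · -- InjOn yy
    intro j hj j' hj' hye
    simp only [Set.mem_setOf_eq] at hj hj'
    obtain ⟨i, hi⟩ := hj
    obtain ⟨i', hi'⟩ := hj'
    simp only [Finset.mem_filter, Finset.mem_product, Finset.mem_range, Nat.lt_succ_iff] at hi hi'
    exact hy j j' hi.1.2 hi'.1.2 hye
  · -- set equality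
    ext ⟨p1, p2⟩
    simp only [Set.mem_setOf_eq, Prod.mk.injEq]
    constructor
    · rintro ⟨j, hj, a, ha, rfl, rfl⟩
      have ha0 : p1 ∈ H 0 := hchain 0 j (Nat.zero_le _) hj ha
      obtain ⟨i, hi, hia⟩ := List.mem_iff_getElem.mp ((hmemL p1).mpr ha0)
      have hxa : xx i = p1 := by
        simp only [hxx]; rw [List.getD_eq_getElem _ _ hi]; exact hia
      refine ⟨(i, j), ?_, hxa.symm, rfl⟩
      simp only [Finset.mem_filter, Finset.mem_product, Finset.mem_range]
      exact ⟨⟨hi, Nat.lt_succ_of_le hj⟩, hxa ▸ (key p1 j hj).mp ha⟩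
    · rintro ⟨⟨i, j⟩, hij, rfl, rfl⟩
      simp only [Finset.mem_filter, Finset.mem_product, Finset.mem_range,
        Nat.lt_succ_iff] at hij
      exact ⟨j, hij.1.2, xx i, (key (xx i) j hij.1.2).mpr hij.2, rfl, rfl⟩
end

section
/- Let Ξ be an x-tower site of μ = ∑_{j=0}^{ν}(m_j+1) points as above. Then the polynomials φ_{ij}, (i,j) ∈ S_x(Ξ), are linearly independent over F, and for any prescribed values f_{mn} ∈ F there is a unique F-linear combination p of the φ_{ij} with p(x_{mn}, y_n) = f_{mn} for all (m,n) ∈ S_x(Ξ). In other words, the evaluation map from span{φ_{ij}} to F^μ is a linear isomorphism. -/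
open MvPolynomial

/-- The staircase (lower set) `S_x(Ξ) = {(i,j) : j ≤ ν, i ≤ m j}` of an x-tower site. -/
def towerIndex (ν : ℕ) (m : ℕ → ℕ) : Finset (ℕ × ℕ) :=
  ((Finset.range (m 0 + 1)) ×ˢ Finset.range (ν + 1)).filter (fun p => p.1 ≤ m p.2)

/-- The Newton fundamental polynomial `φ_{ij}` of an x-tower site. -/
noncomputable def newtonPhi {F : Type*} [Field F] (y : ℕ → F) (xs : ℕ → ℕ → F)
    (i j : ℕ) : MvPolynomial (Fin 2) F :=
  C (((∏ t ∈ Finset.range j, (y j - y t)) * ∏ s ∈ Finset.range i, (xs i j - xs s j))⁻¹) *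
    (∏ t ∈ Finset.range j, (X 1 - C (y t))) * ∏ s ∈ Finset.range i, (X 0 - C (xs s j))

/-- Evaluation of a bivariate polynomial at a point `(a,b)`. -/
noncomputable def ev2 {F : Type*} [Field F] (a b : F) : MvPolynomial (Fin 2) F →+* F :=
  eval (fun k : Fin 2 => if k = 0 then a else b)

lemma ev2_newtonPhi {F : Type*} [Field F] (y : ℕ → F) (xs : ℕ → ℕ → F) (a b : F) (i j : ℕ) :
    ev2 a b (newtonPhi y xs i j) =
      ((∏ t ∈ Finset.range j, (y j - y t)) * ∏ s ∈ Finset.range i, (xs i j - xs s j))⁻¹ *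
        ((∏ t ∈ Finset.range j, (b - y t)) * ∏ s ∈ Finset.range i, (a - xs s j)) := by
  simp [ev2, newtonPhi, mul_assoc]

lemma mem_towerIndex_iff {ν : ℕ} {m : ℕ → ℕ}
    (hm : ∀ j k, j < k → k ≤ ν → m k < m j) {p : ℕ × ℕ} :
    p ∈ towerIndex ν m ↔ p.2 ≤ ν ∧ p.1 ≤ m p.2 := by
  simp only [towerIndex, Finset.mem_filter, Finset.mem_product, Finset.mem_range,
    Nat.lt_succ_iff]
  constructor
  · rintro ⟨⟨_, h2⟩, h3⟩; exact ⟨h2, h3⟩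
  · rintro ⟨h2, h3⟩
    refine ⟨⟨?_, h2⟩, h3⟩
    rcases Nat.eq_zero_or_pos p.2 with h | h
    · rw [h] at h3; exact h3
    · exact h3.trans (hm 0 p.2 h h2).le

/-- the Newton polynomials `φ_{ij}`, `(i,j) ∈ S_x(Ξ)`, of an x-tower site are
linearly independent, and every data vector admits a unique interpolant from their span:
evaluation on the span is a linear isomorphism onto `F^μ`. -/
theorem tower_newton_basis_poised {F : Type*} [Field F] (ν : ℕ) (m : ℕ → ℕ)
    (y : ℕ → F) (xs : ℕ → ℕ → F)
    (hm : ∀ j k, j < k → k ≤ ν → m k < m j)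
    (hy : ∀ j k, j ≤ ν → k ≤ ν → y j = y k → j = k)
    (hx : ∀ j s t, j ≤ ν → s ≤ m j → t ≤ m j → xs s j = xs t j → s = t) :
    LinearIndependent F
      (fun p : towerIndex ν m => newtonPhi y xs (p : ℕ × ℕ).1 (p : ℕ × ℕ).2) ∧
    ∀ f : ℕ × ℕ → F, ∃! c : towerIndex ν m → F,
      ∀ q : towerIndex ν m,
        ev2 (xs (q : ℕ × ℕ).1 (q : ℕ × ℕ).2) (y (q : ℕ × ℕ).2)
          (∑ p ∈ (towerIndex ν m).attach,
            c p • newtonPhi y xs (p : ℕ × ℕ).1 (p : ℕ × ℕ).2) = f q := by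
  set S := towerIndex ν m with hS
  -- the evaluation matrix
  set E : Matrix S S F := fun q p =>
    ev2 (xs (q : ℕ × ℕ).1 (q : ℕ × ℕ).2) (y (q : ℕ × ℕ).2)
      (newtonPhi y xs (p : ℕ × ℕ).1 (p : ℕ × ℕ).2) with hE
  have memS : ∀ q : S, (q : ℕ × ℕ).2 ≤ ν ∧ (q : ℕ × ℕ).1 ≤ m (q : ℕ × ℕ).2 := fun q =>
    (mem_towerIndex_iff hm).mp q.2
  -- diagonal entries are 1
  have hdiag : ∀ q : S, E q q = 1 := by
    intro q
    obtain ⟨h2, h1⟩ := memS q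
    simp only [hE]
    rw [ev2_newtonPhi]
    apply inv_mul_cancel₀
    apply mul_ne_zero
    · rw [Finset.prod_ne_zero_iff]
      intro t ht
      rw [Finset.mem_range] at ht
      intro h0
      have := hy (q : ℕ × ℕ).2 t h2 ((ht.le.trans h2)) (sub_eq_zero.mp h0)
      omega
    · rw [Finset.prod_ne_zero_iff]
      intro s hs
      rw [Finset.mem_range] at hs
      intro h0
      have := hx (q : ℕ × ℕ).2 (q : ℕ × ℕ).1 s h2 h1 ((hs.le.trans h1))
        (sub_eq_zero.mp h0)
      omega
  -- vanishing above the "diagonal"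
  have hvanish : ∀ q p : S, (q : ℕ × ℕ).2 < (p : ℕ × ℕ).2 ∨
      ((q : ℕ × ℕ).2 = (p : ℕ × ℕ).2 ∧ (q : ℕ × ℕ).1 < (p : ℕ × ℕ).1) → E q p = 0 := by
    intro q p h
    simp only [hE]
    rw [ev2_newtonPhi]
    rcases h with h | ⟨he, h⟩
    · have : (∏ t ∈ Finset.range (p : ℕ × ℕ).2, (y (q : ℕ × ℕ).2 - y t)) = 0 :=
        Finset.prod_eq_zero (Finset.mem_range.mpr h) (sub_self _)
      rw [this]; ring
    · have : (∏ s ∈ Finset.range (p : ℕ × ℕ).1,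
          (xs (q : ℕ × ℕ).1 (q : ℕ × ℕ).2 - xs s (p : ℕ × ℕ).2)) = 0 := by
        apply Finset.prod_eq_zero (Finset.mem_range.mpr h)
        rw [he, sub_self]
      rw [this]; ring
  -- key ordering function
  set key : ℕ × ℕ → ℕ := fun p => p.2 * (m 0 + 1) + p.1 with hkey
  have hkeylt : ∀ q p : S, E q p ≠ 0 → p ≠ q → key (p : ℕ × ℕ) < key (q : ℕ × ℕ) := by
    intro q p hne hpq
    obtain ⟨hp2, hp1⟩ := memS p
    obtain ⟨hq2, hq1⟩ := memS q
    have hp1' : (p : ℕ × ℕ).1 ≤ m 0 := by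
      rcases Nat.eq_zero_or_pos (p : ℕ × ℕ).2 with h | h
      · rw [h] at hp1; exact hp1
      · exact hp1.trans (hm 0 _ h hp2).le
    have h2 : (p : ℕ × ℕ).2 ≤ (q : ℕ × ℕ).2 := by
      by_contra h
      exact hne (hvanish q p (Or.inl (by omega)))
    rcases lt_or_eq_of_le h2 with h2 | h2
    · have hmul : ((p : ℕ × ℕ).2 + 1) * (m 0 + 1) ≤ (q : ℕ × ℕ).2 * (m 0 + 1) :=
        Nat.mul_le_mul_right _ (Nat.succ_le_of_lt h2)
      have hsm : ((p : ℕ × ℕ).2 + 1) * (m 0 + 1) = (p : ℕ × ℕ).2 * (m 0 + 1) + (m 0 + 1) :=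
        Nat.succ_mul _ _
      simp only [hkey]; omega
    · have h1 : (p : ℕ × ℕ).1 ≤ (q : ℕ × ℕ).1 := by
        by_contra h
        exact hne (hvanish q p (Or.inr ⟨h2.symm, by omega⟩))
      have : (p : ℕ × ℕ) ≠ (q : ℕ × ℕ) := fun h => hpq (Subtype.ext h)
      have h1' : (p : ℕ × ℕ).1 < (q : ℕ × ℕ).1 := by
        rcases lt_or_eq_of_le h1 with h | h
        · exact h
        · exact absurd (Prod.ext h h2) this
      simp only [hkey]; rw [h2]; omega
  -- injectivity of mulVec
  have hinj : Function.Injective E.mulVec := by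
    have hker : ∀ c : S → F, E.mulVec c = 0 → c = 0 := by
      intro c hc
      have main : ∀ n : ℕ, ∀ q : S, key (q : ℕ × ℕ) < n → c q = 0 := by
        intro n
        induction n with
        | zero => intro q h; omega
        | succ n ih =>
          intro q hq
          have hrow : ∑ p : S, E q p * c p = 0 := congrFun hc q
          have hterms : ∀ p : S, p ∈ (Finset.univ : Finset S) → p ≠ q → E q p * c p = 0 := by
            intro p _ hpq
            by_cases hz : E q p = 0
            · rw [hz, zero_mul]
            · have hk := hkeylt q p hz hpq
              rw [ih p (by omega), mul_zero]
          have := Finset.sum_eq_single q hterms (fun h => absurd (Finset.mem_univ q) h)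
          rw [this, hdiag q, one_mul] at hrow
          exact hrow
      funext q
      exact main (key (q : ℕ × ℕ) + 1) q (Nat.lt_succ_self _)
    intro a b hab
    have : E.mulVec (a - b) = 0 := by
      rw [Matrix.mulVec_sub, hab, sub_self]
    have := hker _ this
    exact sub_eq_zero.mp (by funext q; exact congrFun this q)
  have hbij : Function.Bijective E.mulVecLin := by
    have : Function.Injective E.mulVecLin := hinj
    exact ⟨this, LinearMap.surjective_of_injective this⟩
  -- evaluation of the linear combination equals mulVec
  have hevsum : ∀ (c : S → F) (q : S),
      ev2 (xs (q : ℕ × ℕ).1 (q : ℕ × ℕ).2) (y (q : ℕ × ℕ).2)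
        (∑ p ∈ S.attach, c p • newtonPhi y xs (p : ℕ × ℕ).1 (p : ℕ × ℕ).2)
      = E.mulVec c q := by
    intro c q
    rw [Matrix.mulVec, dotProduct, ← Finset.univ_eq_attach] at *
    rw [map_sum]
    congr 1
    funext p
    rw [smul_eq_C_mul, map_mul]
    simp only [hE]
    rw [show (ev2 (xs (q : ℕ × ℕ).1 (q : ℕ × ℕ).2) (y (q : ℕ × ℕ).2)) (C (c p)) = c p by
      simp [ev2]]
    ring
  constructor
  · rw [Fintype.linearIndependent_iff]
    intro g hg p
    rw [Finset.univ_eq_attach] at hg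
    have hz : E.mulVec g = 0 := by
      funext q
      rw [Pi.zero_apply, ← hevsum g q, hg, map_zero]
    have : g = (0 : {x // x ∈ S} → F) :=
      hinj (show E.mulVec g = E.mulVec 0 by rw [hz, Matrix.mulVec_zero])
    exact congrFun this p
  · intro f
    obtain ⟨c, hc⟩ := hbij.2 (fun q : S => f q)
    refine ⟨c, ?_, ?_⟩
    · intro q
      rw [hevsum c q]
      exact congrFun hc q
    · intro c' hc'
      apply hinj
      funext q
      rw [← hevsum c' q, hc' q]
      have : E.mulVec c q = f q := congrFun hc q
      rw [this]
end

section
/- Let Ξ be an x-tower site. If a polynomial p ∈ F[x,y] vanishes on Ξ and its support (set of monomials with nonzero coefficient) is contained in {x^i y^j : (i,j) ∈ S_x(Ξ)}, then p = 0. -/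
open MvPolynomial


/-- Univariate version: `q : F[x][y]` with staircase coefficient degree bounds
vanishing at the tower nodes is zero. -/
theorem tower_aux {F : Type*} [Field F] :
    ∀ (ν : ℕ) (m : ℕ → ℕ) (y : ℕ → F) (xs : ℕ → ℕ → F),
    (∀ j k, j < k → k ≤ ν → m k < m j) →
    (∀ j k, j ≤ ν → k ≤ ν → y j = y k → j = k) →
    (∀ j s t, j ≤ ν → s ≤ m j → t ≤ m j → xs s j = xs t j → s = t) →
    ∀ q : Polynomial (Polynomial F),
    (∀ j, ν < j → q.coeff j = 0) →
    (∀ j, j ≤ ν → (q.coeff j).natDegree ≤ m j) →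
    (∀ j, j ≤ ν → ∀ i, i ≤ m j → ((q.eval (Polynomial.C (y j))).eval (xs i j)) = 0) →
    q = 0 := by
  intro ν
  induction ν with
  | zero =>
      intro m y xs hm hy hx q hc hd hv
      -- q = C (q.coeff 0)
      have hq : q = Polynomial.C (q.coeff 0) := by
        ext j
        cases j with
        | zero => simp
        | succ j => simp [hc (j+1) (Nat.succ_pos j)]
      have hP : q.coeff 0 = 0 := by
        apply Polynomial.eq_zero_of_natDegree_lt_card_of_eval_eq_zero (q.coeff 0)
          (f := fun i : Fin (m 0 + 1) => xs i 0)
        · intro s t hst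
          exact Fin.ext (hx 0 s t le_rfl (Nat.lt_succ_iff.mp s.2) (Nat.lt_succ_iff.mp t.2) hst)
        · intro i
          have := hv 0 le_rfl i (Nat.lt_succ_iff.mp i.2)
          rwa [hq, Polynomial.eval_C] at this
        · simpa using Nat.lt_succ_of_le (hd 0 le_rfl)
      rw [hq, hP, map_zero]
  | succ n IH =>
      intro m y xs hm hy hx q hc hd hv
      -- degree bound on q
      have hqdeg : q.natDegree ≤ n + 1 :=
        Polynomial.natDegree_le_iff_coeff_eq_zero.mpr (fun j hj => hc j hj)
      -- Step 1 : q.eval (C (y 0)) = 0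
      have hP : q.eval (Polynomial.C (y 0)) = 0 := by
        apply Polynomial.eq_zero_of_natDegree_lt_card_of_eval_eq_zero _
          (f := fun i : Fin (m 0 + 1) => xs i 0)
        · intro s t hst
          exact Fin.ext (hx 0 s t (Nat.zero_le _) (Nat.lt_succ_iff.mp s.2)
            (Nat.lt_succ_iff.mp t.2) hst)
        · intro i
          exact hv 0 (Nat.zero_le _) i (Nat.lt_succ_iff.mp i.2)
        · have : (q.eval (Polynomial.C (y 0))).natDegree ≤ m 0 := by
            rw [Polynomial.eval_eq_sum_range' (Nat.lt_succ_of_le hqdeg)]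
            apply Polynomial.natDegree_sum_le_of_forall_le
            intro j hj
            rw [Finset.mem_range, Nat.lt_succ_iff] at hj
            have h1 : (q.coeff j * Polynomial.C (y 0) ^ j).natDegree ≤ (q.coeff j).natDegree := by
              rw [← Polynomial.C_pow]
              exact (Polynomial.natDegree_mul_C_le _ _)
            refine h1.trans ((hd j hj).trans ?_)
            rcases Nat.eq_zero_or_pos j with rfl | hj0
            · exact le_rfl
            · exact (hm 0 j hj0 hj).le
          simpa using Nat.lt_succ_of_le this
      -- Step 2 : factor out (X - C (C (y 0)))
      obtain ⟨r, hr⟩ := (Polynomial.dvd_iff_isRoot.mpr hP)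
      set a : Polynomial F := Polynomial.C (y 0) with ha
      -- coefficient relation
      have hco : ∀ k, q.coeff (k + 1) = r.coeff k - a * r.coeff (k + 1) := by
        intro k
        rw [hr]
        rw [sub_mul, Polynomial.coeff_sub, Polynomial.coeff_X_mul, Polynomial.coeff_C_mul]
      have hco' : ∀ k, r.coeff k = q.coeff (k + 1) + a * r.coeff (k + 1) := by
        intro k; rw [hco k]; ring
      -- r vanishes above n
      have hrc : ∀ j, n < j → r.coeff j = 0 := by
        intro j hj
        rcases eq_or_ne r 0 with rfl | hr0
        · simp
        · apply Polynomial.coeff_eq_zero_of_natDegree_lt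
          have hne : (Polynomial.X - Polynomial.C a) ≠ 0 := Polynomial.X_sub_C_ne_zero a
          have := Polynomial.natDegree_mul hne hr0
          rw [← hr, Polynomial.natDegree_X_sub_C] at this
          have : r.natDegree ≤ n := by omega
          omega
      -- degree bounds for r
      have hrd : ∀ t j, j + t = n → (r.coeff j).natDegree ≤ m (j + 1) := by
        intro t
        induction t with
        | zero =>
            intro j hj
            subst hj
            simp only [Nat.add_zero] at *
            rw [hco' j, hrc (j + 1) (by omega), mul_zero, add_zero]
            exact hd (j + 1) le_rfl
        | succ t IHt =>
            intro j hj
            rw [hco' j]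
            refine (Polynomial.natDegree_add_le _ _).trans (max_le ?_ ?_)
            · exact hd (j + 1) (by omega)
            · have h1 : (a * r.coeff (j + 1)).natDegree ≤ (r.coeff (j + 1)).natDegree := by
                rw [ha]
                simpa using Polynomial.natDegree_C_mul_le (y 0) (r.coeff (j + 1))
              refine h1.trans ((IHt (j + 1) (by omega)).trans ?_)
              exact (hm (j + 1) (j + 2) (by omega) (by omega)).le
      -- vanishing for r
      have hrv : ∀ j, j ≤ n → ∀ i, i ≤ m (j + 1) →
          ((r.eval (Polynomial.C (y (j + 1)))).eval (xs i (j + 1))) = 0 := by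
        intro j hj i hi
        have h0 := hv (j + 1) (by omega) i (by omega)
        rw [hr] at h0
        rw [Polynomial.eval_mul, Polynomial.eval_mul, Polynomial.eval_sub,
          Polynomial.eval_X, Polynomial.eval_C, Polynomial.eval_sub,
          Polynomial.eval_C] at h0
        have hy0 : y (j + 1) ≠ y 0 := fun h => by
          have := hy (j + 1) 0 (by omega) (by omega) h
          omega
        have hav : Polynomial.eval (xs i (j + 1)) a = y 0 := by rw [ha]; simp
        rw [hav] at h0
        rcases mul_eq_zero.mp h0 with h | h
        · exact absurd (sub_eq_zero.mp h) hy0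
        · exact h
      -- apply the inductive hypothesis
      have hr0 : r = 0 := by
        apply IH (fun j => m (j + 1)) (fun j => y (j + 1)) (fun i j => xs i (j + 1))
        · intro j k hjk hk
          exact hm (j + 1) (k + 1) (by omega) (by omega)
        · intro j k hj hk h
          have := hy (j + 1) (k + 1) (by omega) (by omega) h
          omega
        · intro j s t hj hs ht h
          exact hx (j + 1) s t (by omega) hs ht h
        · exact fun j hj => hrc j hj
        · exact fun j hj => hrd (n - j) j (by omega)
        · exact hrv
      rw [hr, hr0, mul_zero]

theorem term_coeff_coeff {F : Type*} [Field F] (c : F) (k l i j : ℕ) :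
    (((Polynomial.C (Polynomial.C c)) *
      ((Polynomial.C (Polynomial.X : Polynomial F)) ^ k * Polynomial.X ^ l)).coeff j).coeff i
      = if k = i ∧ l = j then c else 0 := by
  rw [← Polynomial.C_pow, ← mul_assoc, ← Polynomial.C_mul,
    Polynomial.coeff_C_mul_X_pow, apply_ite (fun u => Polynomial.coeff u i),
    Polynomial.coeff_zero, Polynomial.coeff_C_mul, Polynomial.coeff_X_pow]
  split_ifs <;> simp_all

section Bridge
variable {F : Type*} [Field F]

noncomputable def toYX (p : MvPolynomial (Fin 2) F) : Polynomial (Polynomial F) :=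
  MvPolynomial.aeval (fun i : Fin 2 =>
    if i = 0 then Polynomial.C Polynomial.X else Polynomial.X) p

theorem toYX_coeff (p : MvPolynomial (Fin 2) F) (i j : ℕ) :
    ((toYX p).coeff j).coeff i
      = MvPolynomial.coeff (Finsupp.single (0 : Fin 2) i + Finsupp.single 1 j) p := by
  classical
  rw [toYX, MvPolynomial.aeval_def, MvPolynomial.eval₂_eq', Polynomial.finset_sum_coeff,
    Polynomial.finset_sum_coeff]
  have hterm : ∀ d ∈ p.support,
      ((((algebraMap F (Polynomial (Polynomial F))) (MvPolynomial.coeff d p)) *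
        ∏ k : Fin 2, (if k = 0 then Polynomial.C (Polynomial.X : Polynomial F)
          else Polynomial.X) ^ d k).coeff j).coeff i
      = if d = Finsupp.single (0 : Fin 2) i + Finsupp.single 1 j
          then MvPolynomial.coeff d p else 0 := by
    intro d _
    rw [Fin.prod_univ_two, if_pos rfl, if_neg (by decide : ¬(1 : Fin 2) = 0)]
    have halg : (algebraMap F (Polynomial (Polynomial F))) (MvPolynomial.coeff d p)
        = Polynomial.C (Polynomial.C (MvPolynomial.coeff d p)) := rfl
    rw [halg, term_coeff_coeff]
    congr 1
    rw [eq_iff_iff]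
    constructor
    · rintro ⟨h0, h1⟩
      ext k
      fin_cases k <;>
        simp [Finsupp.single_apply, ← h0, ← h1]
    · intro h
      subst h
      constructor <;> simp [Finsupp.single_apply]
  rw [Finset.sum_congr rfl hterm, Finset.sum_ite_eq']
  split_ifs with h
  · rfl
  · exact (MvPolynomial.notMem_support_iff.mp h).symm

end Bridge

theorem toYX_eval {F : Type*} [Field F] (a b : F) (p : MvPolynomial (Fin 2) F) :
    Polynomial.eval a (Polynomial.eval (Polynomial.C b) (toYX p))
      = MvPolynomial.eval (fun k : Fin 2 => if k = 0 then a else b) p := by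
  induction p using MvPolynomial.induction_on with
  | C c => simp [toYX]
  | add p q hp hq => simp only [toYX, map_add, Polynomial.eval_add] at *; rw [hp, hq]
  | mul_X p k hp =>
      simp only [toYX, map_mul, Polynomial.eval_mul] at *
      rw [hp, MvPolynomial.aeval_X]
      fin_cases k <;> simp

/-- if a polynomial vanishes at all nodes of an x-tower site and its
support is contained in the staircase monomials `{x^i y^j : (i,j) ∈ S_x(Ξ)}`,
then it is the zero polynomial. -/
theorem tower_vanishing_with_staircase_support_eq_zero {F : Type*} [Field F]
    (ν : ℕ) (m : ℕ → ℕ) (y : ℕ → F) (xs : ℕ → ℕ → F)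
    (hm : ∀ j k, j < k → k ≤ ν → m k < m j)
    (hy : ∀ j k, j ≤ ν → k ≤ ν → y j = y k → j = k)
    (hx : ∀ j s t, j ≤ ν → s ≤ m j → t ≤ m j → xs s j = xs t j → s = t)
    (p : MvPolynomial (Fin 2) F)
    (hsupp : ∀ d ∈ p.support, d 1 ≤ ν ∧ d 0 ≤ m (d 1))
    (hvanish : ∀ j ≤ ν, ∀ i ≤ m j,
      eval (fun k : Fin 2 => if k = 0 then xs i j else y j) p = 0) :
    p = 0 := by
  classical
  set q := toYX p with hq
  have hsingle : ∀ i j : ℕ,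
      (((Finsupp.single (0 : Fin 2) i + Finsupp.single 1 j : Fin 2 →₀ ℕ)) 0 = i) ∧
      (((Finsupp.single (0 : Fin 2) i + Finsupp.single 1 j : Fin 2 →₀ ℕ)) 1 = j) := by
    intro i j
    constructor <;> simp [Finsupp.single_apply]
  have hc : ∀ j, ν < j → q.coeff j = 0 := by
    intro j hj
    apply Polynomial.ext
    intro i
    rw [Polynomial.coeff_zero, hq, toYX_coeff]
    by_contra hne
    have hmem := MvPolynomial.mem_support_iff.mpr hne
    have h1 := (hsupp _ hmem).1
    rw [(hsingle i j).2] at h1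
    omega
  have hd : ∀ j, j ≤ ν → (q.coeff j).natDegree ≤ m j := by
    intro j hj
    apply Polynomial.natDegree_le_iff_coeff_eq_zero.mpr
    intro i hi
    rw [hq, toYX_coeff]
    by_contra hne
    have hmem := MvPolynomial.mem_support_iff.mpr hne
    have h2 := (hsupp _ hmem).2
    rw [(hsingle i j).1, (hsingle i j).2] at h2
    omega
  have hv : ∀ j, j ≤ ν → ∀ i, i ≤ m j →
      ((q.eval (Polynomial.C (y j))).eval (xs i j)) = 0 := by
    intro j hj i hi
    rw [hq, toYX_eval]
    exact hvanish j hj i hi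
  have hq0 : q = 0 := tower_aux ν m y xs hm hy hx q hc hd hv
  apply MvPolynomial.ext
  intro d
  have hd0 : (Finsupp.single (0 : Fin 2) (d 0) + Finsupp.single 1 (d 1)) = d := by
    ext k
    fin_cases k <;> simp [Finsupp.single_apply]
  have hcc := toYX_coeff p (d 0) (d 1)
  rw [hd0, ← hq, hq0] at hcc
  simp only [Polynomial.coeff_zero] at hcc
  rw [← hcc, MvPolynomial.coeff_zero]
end
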